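/- Monotonicity of the finite-horizon Cantor-Kantorovich distance: with the same setup as the recursive formula, K_C(P^{N+1}, Q^{N+1}) ≥ K_C(P^N, Q^N), since r(s) ≥ Σ_{s' ∈ S} r(s s') for every s ∈ S^N, where r denotes pointwise minimum of the distributions. -/
import Mathlib


open scoped BigOperators
open Classical Filter

noncomputable section

/-- Cantor distance `C(a,b) = 2^{-inf{k : a_k ≠ b_k}}`, with `C(a,b)=0` if `a = b`. -/
def cantor {S : Type*} {N : ℕ} (a b : Fin N → S) : ℝ :=
  if a = b then 0
  else (2 : ℝ) ^ (-((sInf {k : ℕ | ∃ hk : k < N, a ⟨k, hk⟩ ≠ b ⟨k, hk⟩} : ℕ) : ℤ))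

/-- `P` is a probability distribution on a finite set. -/
def IsProb {Ω : Type*} [Fintype Ω] (P : Ω → ℝ) : Prop :=
  (∀ x, 0 ≤ P x) ∧ ∑ x, P x = 1

/-- `π` is a coupling of `P` and `Q`. -/
def IsCoupling {Ω : Type*} [Fintype Ω] (P Q : Ω → ℝ) (π : Ω × Ω → ℝ) : Prop :=
  (∀ x, 0 ≤ π x) ∧ (∀ a, ∑ b, π (a, b) = P a) ∧ (∀ b, ∑ a, π (a, b) = Q b)

/-- Kantorovich distance: infimum (attained, hence minimum) over couplings of the
expected ground distance. -/
def Kant {Ω : Type*} [Fintype Ω] (D : Ω → Ω → ℝ) (P Q : Ω → ℝ) : ℝ :=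
  sInf {c : ℝ | ∃ π, IsCoupling P Q π ∧ c = ∑ x : Ω × Ω, D x.1 x.2 * π x}

/-- Marginal of a distribution on sequences of length `N+1` onto the first `N`
coordinates. -/
def marg {S : Type*} [Fintype S] {N : ℕ} (P : (Fin (N + 1) → S) → ℝ) :
    (Fin N → S) → ℝ :=
  fun s => ∑ x : S, P (Fin.snoc s x)

/-- Dirac distribution at a point. -/
def dirac {Ω : Type*} (a : Ω) : Ω → ℝ := fun x => if x = a then 1 else 0

/-- MDP-induced path distribution on sequences of length `N+1`:
`P(s_0 ... s_N) = μ(s_0) ∏_i τ_{p(s_i)}(s_i, s_{i+1})`. -/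
def pathP {S U : Type*} [Fintype S] (μ : S → ℝ) (τ : U → S → S → ℝ) (p : S → U)
    (N : ℕ) (s : Fin (N + 1) → S) : ℝ :=
  μ (s 0) * ∏ i : Fin N, τ (p (s i.castSucc)) (s i.castSucc) (s i.succ)

end

lemma cantor_nonneg {S : Type*} {N : ℕ} (a b : Fin N → S) : 0 ≤ cantor a b := by
  unfold cantor
  split
  · exact le_refl 0
  · positivity

lemma cantor_snoc_le {S : Type*} {N : ℕ} (a b : Fin N → S) (x y : S) :
    cantor a b ≤ cantor (Fin.snoc a x) (Fin.snoc b y) := by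
  by_cases hab : a = b
  · simp only [cantor, if_pos hab]
    exact cantor_nonneg _ _
  · have hne : (Fin.snoc a x : Fin (N+1) → S) ≠ Fin.snoc b y := by
      intro h
      apply hab
      have := congrArg Fin.init h
      rwa [Fin.init_snoc, Fin.init_snoc] at this
    simp only [cantor, if_neg hab, if_neg hne]
    have hsub : {k : ℕ | ∃ hk : k < N, a ⟨k, hk⟩ ≠ b ⟨k, hk⟩} ⊆
        {k : ℕ | ∃ hk : k < N + 1,
          (Fin.snoc a x : Fin (N+1) → S) ⟨k, hk⟩ ≠ (Fin.snoc b y : Fin (N+1) → S) ⟨k, hk⟩} := by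
      intro k hk
      obtain ⟨hkN, hne'⟩ := hk
      refine ⟨hkN.trans (Nat.lt_succ_self N), ?_⟩
      have h1 : ((⟨k, hkN.trans (Nat.lt_succ_self N)⟩ : Fin (N+1))) =
          Fin.castSucc ⟨k, hkN⟩ := rfl
      rw [h1, Fin.snoc_castSucc, Fin.snoc_castSucc]
      exact hne'
    have hne2 : {k : ℕ | ∃ hk : k < N, a ⟨k, hk⟩ ≠ b ⟨k, hk⟩}.Nonempty := by
      by_contra h
      apply hab
      funext i
      by_contra hi
      exact h ⟨i.1, i.2, by simpa using hi⟩
    have hle : sInf {k : ℕ | ∃ hk : k < N + 1,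
          (Fin.snoc a x : Fin (N+1) → S) ⟨k, hk⟩ ≠ (Fin.snoc b y : Fin (N+1) → S) ⟨k, hk⟩}
        ≤ sInf {k : ℕ | ∃ hk : k < N, a ⟨k, hk⟩ ≠ b ⟨k, hk⟩} :=
      Nat.sInf_le (hsub (Nat.sInf_mem hne2))
    apply zpow_le_zpow_right₀ (by norm_num)
    omega

lemma sum_snoc_eq {S : Type*} [Fintype S] {N : ℕ} (f : (Fin (N+1) → S) → ℝ) :
    ∑ g : Fin (N+1) → S, f g = ∑ p : S × (Fin N → S), f (Fin.snoc p.2 p.1) :=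
  (Fintype.sum_equiv (Fin.snocEquiv (fun _ => S)) _ _ (fun _ => rfl)).symm

lemma reorder3 {α β γ : Type*} [Fintype α] [Fintype β] [Fintype γ]
    (F : α → β → γ → ℝ) :
    ∑ a, ∑ b, ∑ c, F a b c = ∑ b, ∑ c, ∑ a, F a b c := by
  rw [Finset.sum_comm]
  exact Finset.sum_congr rfl fun b _ => Finset.sum_comm

lemma reorder4 {α β γ δ : Type*} [Fintype α] [Fintype β] [Fintype γ] [Fintype δ]
    (F : α → β → γ → δ → ℝ) :
    ∑ a, ∑ b, ∑ x, ∑ y, F a b x y = ∑ x, ∑ a, ∑ y, ∑ b, F a b x y := by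
  calc ∑ a, ∑ b, ∑ x, ∑ y, F a b x y
      = ∑ a, ∑ x, ∑ b, ∑ y, F a b x y :=
        Finset.sum_congr rfl fun a _ => Finset.sum_comm
    _ = ∑ x, ∑ a, ∑ b, ∑ y, F a b x y := Finset.sum_comm
    _ = ∑ x, ∑ a, ∑ y, ∑ b, F a b x y :=
        Finset.sum_congr rfl fun x _ =>
          Finset.sum_congr rfl fun a _ => Finset.sum_comm

/-- Monotonicity of the finite-horizon Cantor–Kantorovich distance:
`K_C(P^{N+1}, Q^{N+1}) ≥ K_C(P^N, Q^N)`. -/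
theorem kant_cantor_monotone {S : Type*} [Fintype S] {N : ℕ}
    (P Q : (Fin (N + 1) → S) → ℝ) (hP : IsProb P) (hQ : IsProb Q) :
    Kant cantor (marg P) (marg Q) ≤ Kant cantor P Q := by
  apply le_csInf
  · -- nonempty: product coupling
    refine ⟨_, fun fg => P fg.1 * Q fg.2, ⟨fun x => mul_nonneg (hP.1 _) (hQ.1 _), ?_, ?_⟩, rfl⟩
    · intro a; simp only; rw [← Finset.mul_sum, hQ.2, mul_one]
    · intro b; simp only; rw [← Finset.sum_mul, hP.2, one_mul]
  · rintro c ⟨π, ⟨hπ0, hπ1, hπ2⟩, rfl⟩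
    set π' : (Fin N → S) × (Fin N → S) → ℝ :=
      fun ab => ∑ p : S × S, π (Fin.snoc ab.1 p.1, Fin.snoc ab.2 p.2) with hπ'
    have hcoup : IsCoupling (marg P) (marg Q) π' := by
      refine ⟨fun x => Finset.sum_nonneg fun p _ => hπ0 _, ?_, ?_⟩
      · intro a
        calc ∑ b : Fin N → S, π' (a, b)
            = ∑ b : Fin N → S, ∑ x : S, ∑ y : S, π (Fin.snoc a x, Fin.snoc b y) := by
              simp only [hπ', Fintype.sum_prod_type]
          _ = ∑ x : S, ∑ y : S, ∑ b : Fin N → S, π (Fin.snoc a x, Fin.snoc b y) :=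
              reorder3 _
          _ = ∑ x : S, ∑ q : S × (Fin N → S), π (Fin.snoc a x, Fin.snoc q.2 q.1) := by
              simp only [Fintype.sum_prod_type]
          _ = ∑ x : S, ∑ g : Fin (N+1) → S, π (Fin.snoc a x, g) :=
              Finset.sum_congr rfl fun x _ =>
                (sum_snoc_eq (fun g => π (Fin.snoc a x, g))).symm
          _ = marg P a := Finset.sum_congr rfl fun x _ => hπ1 _
      · intro b
        calc ∑ a : Fin N → S, π' (a, b)
            = ∑ a : Fin N → S, ∑ x : S, ∑ y : S, π (Fin.snoc a x, Fin.snoc b y) := by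
              simp only [hπ', Fintype.sum_prod_type]
          _ = ∑ a : Fin N → S, ∑ y : S, ∑ x : S, π (Fin.snoc a x, Fin.snoc b y) :=
              Finset.sum_congr rfl fun a _ => Finset.sum_comm
          _ = ∑ y : S, ∑ x : S, ∑ a : Fin N → S, π (Fin.snoc a x, Fin.snoc b y) :=
              reorder3 _
          _ = ∑ y : S, ∑ q : S × (Fin N → S), π (Fin.snoc q.2 q.1, Fin.snoc b y) := by
              simp only [Fintype.sum_prod_type]
          _ = ∑ y : S, ∑ f : Fin (N+1) → S, π (f, Fin.snoc b y) :=
              Finset.sum_congr rfl fun y _ =>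
                (sum_snoc_eq (fun f => π (f, Fin.snoc b y))).symm
          _ = marg Q b := Finset.sum_congr rfl fun y _ => hπ2 _
    have hbdd : BddBelow {c : ℝ | ∃ ρ, IsCoupling (marg P) (marg Q) ρ ∧
        c = ∑ x : (Fin N → S) × (Fin N → S), cantor x.1 x.2 * ρ x} := by
      refine ⟨0, ?_⟩
      rintro c ⟨ρ, hρ, rfl⟩
      exact Finset.sum_nonneg fun x _ => mul_nonneg (cantor_nonneg _ _) (hρ.1 _)
    refine le_trans (csInf_le hbdd ⟨π', hcoup, rfl⟩) ?_
    calc ∑ x : (Fin N → S) × (Fin N → S), cantor x.1 x.2 * π' x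
        = ∑ a, ∑ b, ∑ x, ∑ y, cantor a b * π (Fin.snoc a x, Fin.snoc b y) := by
          simp only [hπ', Fintype.sum_prod_type, Finset.mul_sum]
      _ ≤ ∑ a, ∑ b, ∑ x, ∑ y,
            cantor (Fin.snoc a x) (Fin.snoc b y) * π (Fin.snoc a x, Fin.snoc b y) := by
          refine Finset.sum_le_sum fun a _ => Finset.sum_le_sum fun b _ =>
            Finset.sum_le_sum fun x _ => Finset.sum_le_sum fun y _ => ?_
          exact mul_le_mul_of_nonneg_right (cantor_snoc_le a b x y) (hπ0 _)
      _ = ∑ x, ∑ a, ∑ y, ∑ b,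
            cantor (Fin.snoc a x) (Fin.snoc b y) * π (Fin.snoc a x, Fin.snoc b y) :=
          reorder4 _
      _ = ∑ z : (Fin (N+1) → S) × (Fin (N+1) → S), cantor z.1 z.2 * π z := by
          rw [Fintype.sum_prod_type,
            sum_snoc_eq (fun f => ∑ g, cantor f g * π (f, g)), Fintype.sum_prod_type]
          refine Finset.sum_congr rfl fun x _ => Finset.sum_congr rfl fun a _ => ?_
          rw [sum_snoc_eq (fun g => cantor (Fin.snoc a x) g * π (Fin.snoc a x, g)),
            Fintype.sum_prod_type]
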